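/- arXiv:1712.07917 — 2 statements merged into one kernel-verified Lean document; each statement's English description precedes it below -/
import Mathlib

section
/- The Bogovskiĭ kernel N(x,y) vanishes identically for all x ∉ Ω and all y ∈ Ω; consequently the Bogovskiĭ potential v(x) = ∫_Ω F(y) N(x,y) dy vanishes for every x ∈ ℝ^n \ Ω, for any F ∈ L^q(Ω) with q > n. -/
open MeasureTheory Metric Set Filter
open scoped ENNReal Topology

/-- The Bogovskiĭ kernel. -/
noncomputable def bogN (n : ℕ) (ψ : EuclideanSpace ℝ (Fin n) → ℝ)
    (x y : EuclideanSpace ℝ (Fin n)) : EuclideanSpace ℝ (Fin n) :=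
  ((‖x - y‖ ^ n)⁻¹ *
    ∫ ξ in Set.Ioi ‖x - y‖, ψ (y + (ξ / ‖x - y‖) • (x - y)) * ξ ^ (n - 1)) • (x - y)

theorem stmt2 (n : ℕ) (hn : 2 ≤ n)
    (ψ : EuclideanSpace ℝ (Fin n) → ℝ)
    (hψ : ContDiff ℝ (⊤ : ℕ∞) ψ) (hψc : HasCompactSupport ψ)
    (hψs : tsupport ψ ⊆ Metric.ball (0 : EuclideanSpace ℝ (Fin n)) 1)
    (Ω : Set (EuclideanSpace ℝ (Fin n))) (hΩo : IsOpen Ω) (hΩb : Bornology.IsBounded Ω)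
    (hstar : ∀ z ∈ Metric.closedBall (0 : EuclideanSpace ℝ (Fin n)) 1, StarConvex ℝ z Ω) :
    (∀ x ∉ Ω, ∀ y ∈ Ω, bogN n ψ x y = 0) ∧
    ∀ q : ℝ, (n : ℝ) < q → ∀ F : EuclideanSpace ℝ (Fin n) → ℝ,
      MemLp F (ENNReal.ofReal q) (volume.restrict Ω) →
      ∀ x ∉ Ω, (∫ y in Ω, F y • bogN n ψ x y) = 0 := by
  have h1 : ∀ x ∉ Ω, ∀ y ∈ Ω, bogN n ψ x y = 0 := by
    intro x hx y hy
    have hxy : x ≠ y := fun h => hx (h ▸ hy)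
    have hr : 0 < ‖x - y‖ := by
      rw [norm_pos_iff]
      exact sub_ne_zero.mpr hxy
    have hzero : ∀ ξ ∈ Set.Ioi ‖x - y‖,
        ψ (y + (ξ / ‖x - y‖) • (x - y)) * ξ ^ (n - 1) = 0 := by
      intro ξ hξ
      have hξr : ‖x - y‖ < ξ := hξ
      have hξ0 : 0 < ξ := hr.trans hξr
      have hψ0 : ψ (y + (ξ / ‖x - y‖) • (x - y)) = 0 := by
        by_contra hne
        set z := y + (ξ / ‖x - y‖) • (x - y) with hz
        have hzsupp : z ∈ tsupport ψ := subset_tsupport ψ hne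
        have hzball : z ∈ Metric.closedBall (0 : EuclideanSpace ℝ (Fin n)) 1 :=
          Metric.ball_subset_closedBall (hψs hzsupp)
        have hsc := hstar z hzball
        have ha : (0:ℝ) ≤ ‖x - y‖ / ξ := by positivity
        have hb : (0:ℝ) ≤ 1 - ‖x - y‖ / ξ := by
          have : ‖x - y‖ / ξ ≤ 1 := by
            rw [div_le_one hξ0]; exact hξr.le
          linarith
        have hab : ‖x - y‖ / ξ + (1 - ‖x - y‖ / ξ) = 1 := by ring
        have hmem := hsc hy ha hb hab
        have hx' : (‖x - y‖ / ξ) • z + (1 - ‖x - y‖ / ξ) • y = x := by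
          rw [hz, smul_add, smul_smul]
          have h1' : ‖x - y‖ / ξ * (ξ / ‖x - y‖) = 1 := by
            field_simp
          rw [h1', one_smul]
          module
        rw [hx'] at hmem
        exact hx hmem
      rw [hψ0, zero_mul]
    have hint : (∫ ξ in Set.Ioi ‖x - y‖,
        ψ (y + (ξ / ‖x - y‖) • (x - y)) * ξ ^ (n - 1)) = 0 := by
      rw [setIntegral_congr_fun measurableSet_Ioi hzero, integral_zero]
    unfold bogN
    rw [hint, mul_zero, zero_smul]
  refine ⟨h1, ?_⟩
  intro q hq F hF x hx
  have : ∀ y ∈ Ω, F y • bogN n ψ x y = (0 : EuclideanSpace ℝ (Fin n)) := by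
    intro y hy
    rw [h1 x hx y hy, smul_zero]
  rw [setIntegral_congr_fun hΩo.measurableSet this, integral_zero]
end

section
/- For q > n and F ∈ L^q(Ω), the Bogovskiĭ potential v(x) = ∫_Ω F(y) N(x,y) dy is well-defined for every x ∈ ℝ^n (the integrand is integrable in y for each fixed x), and satisfies the uniform bound |v(x)| ≤ c ‖F‖_{L^q(Ω)} for all x ∈ ℝ^n, with c depending only on n, ψ, diam Ω, and q. -/
open MeasureTheory Metric Set Filter
open scoped ENNReal Topology

lemma riesz_finite (n : ℕ) (hn : 1 ≤ n) {a : ℝ} (ha : 0 < a) (han : a < n) :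
    ∫⁻ z in Metric.ball (0 : EuclideanSpace ℝ (Fin n)) 1, ENNReal.ofReal (‖z‖ ^ (-a)) < ⊤ := by
  classical
  haveI : Nonempty (Fin n) := Fin.pos_iff_nonempty.mp (by omega)
  haveI : Nontrivial (EuclideanSpace ℝ (Fin n)) := inferInstance
  set b : ℝ := 2⁻¹ with hbdef
  have hb0 : (0:ℝ) < b := by norm_num
  have hb1 : b < 1 := by norm_num
  set f : EuclideanSpace ℝ (Fin n) → ℝ≥0∞ := fun z => ENNReal.ofReal (‖z‖ ^ (-a)) with hfdef
  set A : ℕ → Set (EuclideanSpace ℝ (Fin n)) := fun k => {z | b ^ (k+1) ≤ ‖z‖ ∧ ‖z‖ < b ^ k}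
    with hAdef
  have hAmeas : ∀ k, MeasurableSet (A k) := fun k =>
    ((measurableSet_le measurable_const measurable_norm).inter
      (measurableSet_lt measurable_norm measurable_const))
  have hcover : Metric.ball (0 : EuclideanSpace ℝ (Fin n)) 1 ⊆ {0} ∪ ⋃ k, A k := by
    intro z hz
    rcases eq_or_ne z 0 with rfl | hz0
    · exact Or.inl rfl
    right
    have ht0 : 0 < ‖z‖ := norm_pos_iff.mpr hz0
    have ht1 : ‖z‖ < 1 := mem_ball_zero_iff.mp hz
    obtain ⟨m, hm⟩ := exists_pow_lt_of_lt_one ht0 hb1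
    have hS : ∃ k, b ^ (k+1) ≤ ‖z‖ :=
      ⟨m, le_of_lt (lt_of_le_of_lt (pow_le_pow_of_le_one hb0.le hb1.le (Nat.le_succ m)) hm)⟩
    refine mem_iUnion.mpr ⟨Nat.find hS, Nat.find_spec hS, ?_⟩
    rcases Nat.eq_zero_or_pos (Nat.find hS) with hk0 | hkpos
    · rw [hk0, pow_zero]; exact ht1
    · have hmin := Nat.find_min hS (Nat.sub_lt hkpos one_pos)
      have hkk : Nat.find hS - 1 + 1 = Nat.find hS := Nat.succ_pred_eq_of_pos hkpos
      rw [hkk] at hmin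
      exact lt_of_not_ge hmin
  set V : ℝ≥0∞ := volume (Metric.ball (0 : EuclideanSpace ℝ (Fin n)) 1) with hVdef
  set w : ℝ≥0∞ := ENNReal.ofReal (b ^ ((n:ℝ) - a)) with hwdef
  have hw1 : w < 1 := by
    rw [hwdef]
    refine ENNReal.ofReal_lt_one.mpr (Real.rpow_lt_one hb0.le hb1 ?_)
    have : (1:ℝ) ≤ (n:ℝ) := by exact_mod_cast hn
    linarith
  set D : ℝ≥0∞ := ENNReal.ofReal (b ^ (-a)) with hDdef
  have hterm : ∀ k, ∫⁻ z in A k, f z ≤ (D * V) * w ^ k := by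
    intro k
    have key : ((b ^ (k+1) : ℝ) ^ (-a)) * ((b ^ k : ℝ) ^ n) = b ^ (-a) * (b ^ ((n:ℝ) - a)) ^ k := by
      rw [← Real.rpow_natCast b (k+1), ← Real.rpow_natCast b k,
        ← Real.rpow_mul hb0.le, ← Real.rpow_natCast (b ^ ((k:ℝ))) n,
        ← Real.rpow_mul hb0.le, ← Real.rpow_natCast (b ^ ((n:ℝ) - a)) k,
        ← Real.rpow_mul hb0.le, ← Real.rpow_add hb0, ← Real.rpow_add hb0]
      congr 1
      push_cast
      ring
    calc ∫⁻ z in A k, f z ≤ ∫⁻ _ in A k, ENNReal.ofReal ((b ^ (k+1) : ℝ) ^ (-a)) := by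
          refine setLIntegral_mono' (hAmeas k) fun z hz => ?_
          exact ENNReal.ofReal_le_ofReal
            (Real.rpow_le_rpow_of_nonpos (pow_pos hb0 _) hz.1 (neg_nonpos.mpr ha.le))
      _ = ENNReal.ofReal ((b ^ (k+1) : ℝ) ^ (-a)) * volume (A k) := setLIntegral_const _ _
      _ ≤ ENNReal.ofReal ((b ^ (k+1) : ℝ) ^ (-a)) *
            volume (Metric.ball (0 : EuclideanSpace ℝ (Fin n)) (b ^ k)) := by
          refine mul_le_mul_right (measure_mono ?_) _
          intro z hz
          exact mem_ball_zero_iff.mpr hz.2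
      _ = ENNReal.ofReal ((b ^ (k+1) : ℝ) ^ (-a)) * (ENNReal.ofReal ((b ^ k : ℝ) ^ n) * V) := by
          rw [Measure.addHaar_ball volume 0 (pow_nonneg hb0.le k), finrank_euclideanSpace_fin,
            hVdef]
      _ = (ENNReal.ofReal (((b ^ (k+1) : ℝ) ^ (-a)) * ((b ^ k : ℝ) ^ n))) * V := by
          rw [ENNReal.ofReal_mul (Real.rpow_nonneg (pow_nonneg hb0.le _) _)]
          ring
      _ = (D * w ^ k) * V := by
          rw [key, ENNReal.ofReal_mul (Real.rpow_nonneg hb0.le _),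
            ENNReal.ofReal_pow (Real.rpow_nonneg hb0.le _)]
      _ = (D * V) * w ^ k := by ring
  calc ∫⁻ z in Metric.ball (0 : EuclideanSpace ℝ (Fin n)) 1, f z
      ≤ ∫⁻ z in ({0} : Set (EuclideanSpace ℝ (Fin n))) ∪ ⋃ k, A k, f z :=
        lintegral_mono_set hcover
    _ ≤ (∫⁻ z in ({0} : Set (EuclideanSpace ℝ (Fin n))), f z) + ∫⁻ z in ⋃ k, A k, f z :=
        lintegral_union_le _ _ _
    _ ≤ 0 + ∑' k, ∫⁻ z in A k, f z := by
        gcongr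
        · exact le_of_eq (setLIntegral_measure_zero _ _ (measure_singleton 0))
        · exact lintegral_iUnion_le _ _
    _ ≤ 0 + ∑' k : ℕ, (D * V) * w ^ k := by
        gcongr
        exact hterm _
    _ = (D * V) * (1 - w)⁻¹ := by
        rw [zero_add, ENNReal.tsum_mul_left, ENNReal.tsum_geometric]
    _ < ⊤ := by
        refine ENNReal.mul_lt_top (ENNReal.mul_lt_top ENNReal.ofReal_lt_top ?_)
          (ENNReal.inv_lt_top.mpr (tsub_pos_of_lt hw1))
        exact measure_ball_lt_top

lemma lint_bound (n : ℕ) {a : ℝ} (ha : 0 < a)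
    (Ω : Set (EuclideanSpace ℝ (Fin n))) (x : EuclideanSpace ℝ (Fin n)) :
    ∫⁻ y in Ω, ENNReal.ofReal (‖x - y‖ ^ (-a)) ≤
      (∫⁻ z in Metric.ball (0 : EuclideanSpace ℝ (Fin n)) 1, ENNReal.ofReal (‖z‖ ^ (-a)))
        + volume Ω := by
  set f : EuclideanSpace ℝ (Fin n) → ℝ≥0∞ := fun z => ENNReal.ofReal (‖z‖ ^ (-a)) with hfdef
  have hfm : Measurable f := by
    have : Measurable fun z : EuclideanSpace ℝ (Fin n) => ‖z‖ ^ (-a) := by fun_prop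
    exact this.ennreal_ofReal
  set g : EuclideanSpace ℝ (Fin n) → ℝ≥0∞ :=
    (Metric.ball (0 : EuclideanSpace ℝ (Fin n)) 1).indicator f with hgdef
  have hgm : Measurable g := hfm.indicator measurableSet_ball
  have hmemb : ∀ y : EuclideanSpace ℝ (Fin n), y ∈ Metric.ball x 1 ↔
      x - y ∈ Metric.ball (0 : EuclideanSpace ℝ (Fin n)) 1 := by
    intro y
    rw [mem_ball, mem_ball_zero_iff, dist_eq_norm, norm_sub_rev]
  have hpt : ∀ y, f (x - y) ≤ g (x - y) + 1 := by
    intro y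
    by_cases hy : x - y ∈ Metric.ball (0 : EuclideanSpace ℝ (Fin n)) 1
    · rw [hgdef, Set.indicator_of_mem hy]; exact le_self_add
    · rw [hgdef, Set.indicator_of_notMem hy, zero_add]
      have h1 : (1:ℝ) ≤ ‖x - y‖ := by
        rw [mem_ball_zero_iff, not_lt] at hy; exact hy
      calc f (x - y) ≤ ENNReal.ofReal 1 :=
            ENNReal.ofReal_le_ofReal
              (Real.rpow_le_one_of_one_le_of_nonpos h1 (neg_nonpos.mpr ha.le))
        _ = 1 := ENNReal.ofReal_one
  calc ∫⁻ y in Ω, f (x - y)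
      ≤ ∫⁻ y in Ω, (g (x - y) + 1) := lintegral_mono hpt
    _ = (∫⁻ y in Ω, g (x - y)) + ∫⁻ _ in Ω, (1:ℝ≥0∞) := by
        exact lintegral_add_left (hgm.comp (measurable_const.sub measurable_id)) _
    _ ≤ (∫⁻ y, g (x - y)) + volume Ω := by
        gcongr
        · exact Measure.restrict_le_self
        · rw [lintegral_one, Measure.restrict_apply_univ]
    _ = (∫⁻ z, g z) + volume Ω := by
        rw [(Measure.measurePreserving_sub_left volume x).lintegral_comp hgm]
    _ = (∫⁻ z in Metric.ball (0 : EuclideanSpace ℝ (Fin n)) 1, f z) + volume Ω := by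
        rw [hgdef, lintegral_indicator measurableSet_ball]

lemma kernel_bound (n : ℕ) (hn : 2 ≤ n) (ψ : EuclideanSpace ℝ (Fin n) → ℝ)
    (hψs : tsupport ψ ⊆ Metric.ball (0 : EuclideanSpace ℝ (Fin n)) 1)
    {M R : ℝ} (hM : ∀ z, |ψ z| ≤ M) (hR : 0 ≤ R)
    (x y : EuclideanSpace ℝ (Fin n)) (hy : ‖y‖ < R) :
    ‖bogN n ψ x y‖ ≤ (M * (1+R)^n) * ‖x - y‖ ^ ((1:ℝ) - n) := by
  have hM0 : 0 ≤ M := le_trans (abs_nonneg _) (hM 0)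
  have hR1 : (0:ℝ) < 1 + R := by linarith
  rcases eq_or_ne x y with rfl | hxy
  · simp only [bogN, sub_self, smul_zero, norm_zero]
    positivity
  have hr : 0 < ‖x - y‖ := by
    rw [norm_pos_iff, sub_ne_zero]; exact hxy
  set r : ℝ := ‖x - y‖ with hrdef
  -- bound the inner integral
  set I : ℝ := ∫ ξ in Set.Ioi r, ψ (y + (ξ / r) • (x - y)) * ξ ^ (n - 1) with hIdef
  set g : ℝ → ℝ := (Set.Ioo (0:ℝ) (1+R)).indicator (fun ξ => M * ξ ^ (n - 1)) with hgdef
  have hgint : Integrable g volume := by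
    refine IntegrableOn.integrable_indicator ?_ measurableSet_Ioo
    exact ((continuous_const.mul (continuous_pow (n-1))).integrableOn_Icc).mono_set
      Set.Ioo_subset_Icc_self
  have hg0 : 0 ≤ᶠ[ae volume] g := by
    refine Filter.Eventually.of_forall fun ξ => ?_
    refine Set.indicator_nonneg (fun ξ hξ => ?_) _
    exact mul_nonneg hM0 (pow_nonneg hξ.1.le _)
  have hbound : ∀ ξ ∈ Set.Ioi r, ‖ψ (y + (ξ / r) • (x - y)) * ξ ^ (n - 1)‖ ≤ g ξ := by
    intro ξ hξ
    have hξ0 : 0 < ξ := lt_trans hr hξ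
    by_cases hψ0 : ψ (y + (ξ / r) • (x - y)) = 0
    · rw [hψ0, zero_mul, norm_zero]
      refine Set.indicator_nonneg (fun ξ' hξ' => mul_nonneg hM0 (pow_nonneg hξ'.1.le _)) _
    · have hmem : y + (ξ / r) • (x - y) ∈ Metric.ball (0 : EuclideanSpace ℝ (Fin n)) 1 :=
        hψs (subset_tsupport ψ hψ0)
      have hz1 : ‖y + (ξ / r) • (x - y)‖ < 1 := mem_ball_zero_iff.mp hmem
      have hnorm : ‖(ξ / r) • (x - y)‖ = ξ := by
        rw [norm_smul, Real.norm_eq_abs, abs_of_pos (div_pos hξ0 hr), ← hrdef,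
          div_mul_cancel₀ _ hr.ne']
      have hξlt : ξ < 1 + R := by
        have : ‖(ξ / r) • (x - y)‖ ≤ ‖y + (ξ / r) • (x - y)‖ + ‖y‖ := by
          calc ‖(ξ / r) • (x - y)‖ = ‖(y + (ξ / r) • (x - y)) - y‖ := by rw [add_sub_cancel_left]
            _ ≤ ‖y + (ξ / r) • (x - y)‖ + ‖y‖ := norm_sub_le _ _
        rw [hnorm] at this
        linarith
      have hgξ : g ξ = M * ξ ^ (n - 1) := Set.indicator_of_mem (Set.mem_Ioo.mpr ⟨hξ0, hξlt⟩) _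
      rw [hgξ, norm_mul, Real.norm_eq_abs, Real.norm_eq_abs, abs_pow, abs_of_pos hξ0]
      exact mul_le_mul_of_nonneg_right (hM _) (pow_nonneg hξ0.le _)
  have hIbound : |I| ≤ M * (1+R)^n := by
    have h1 : |I| ≤ ∫ ξ in Set.Ioi r, g ξ := by
      rw [hIdef, ← Real.norm_eq_abs]
      refine norm_integral_le_of_norm_le hgint.restrict ?_
      exact (ae_restrict_iff' measurableSet_Ioi).mpr (Filter.Eventually.of_forall hbound)
    have h2 : ∫ ξ in Set.Ioi r, g ξ ≤ ∫ ξ, g ξ := setIntegral_le_integral hgint hg0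
    have h3 : ∫ ξ, g ξ = ∫ ξ in Set.Ioo (0:ℝ) (1+R), M * ξ ^ (n - 1) := by
      rw [hgdef, integral_indicator measurableSet_Ioo]
    have h4 : ∫ ξ in Set.Ioo (0:ℝ) (1+R), M * ξ ^ (n - 1) ≤ (M * (1+R)^(n-1)) * (1 + R) := by
      have hb : ∀ ξ ∈ Set.Ioo (0:ℝ) (1+R), ‖M * ξ ^ (n - 1)‖ ≤ M * (1+R)^(n-1) := by
        intro ξ hξ
        rw [norm_mul, Real.norm_eq_abs, Real.norm_eq_abs, abs_pow, abs_of_pos hξ.1,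
          abs_of_nonneg hM0]
        exact mul_le_mul_of_nonneg_left (pow_le_pow_left₀ hξ.1.le hξ.2.le _) hM0
      have := norm_setIntegral_le_of_norm_le_const (μ := volume) (s := Set.Ioo (0:ℝ) (1+R))
        (C := M * (1+R)^(n-1)) (f := fun ξ => M * ξ ^ (n - 1)) ?_ hb
      · refine le_trans (le_abs_self _) ?_
        rw [← Real.norm_eq_abs]
        refine le_trans this ?_
        rw [measureReal_def, Real.volume_Ioo, sub_zero, ENNReal.toReal_ofReal hR1.le]
      · exact measure_Ioo_lt_top
    have h5 : (M * (1+R)^(n-1)) * (1 + R) = M * (1+R)^n := by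
      rw [mul_assoc, ← pow_succ]
      congr 2
      omega
    linarith
  -- assemble
  have hnorm : ‖bogN n ψ x y‖ = |(r ^ n)⁻¹ * I| * r := by
    rw [bogN, norm_smul, Real.norm_eq_abs]
  have habs : |(r ^ n)⁻¹ * I| ≤ (r ^ n)⁻¹ * (M * (1+R)^n) := by
    rw [abs_mul, abs_of_nonneg (inv_nonneg.mpr (pow_nonneg hr.le _))]
    exact mul_le_mul_of_nonneg_left hIbound (inv_nonneg.mpr (pow_nonneg hr.le _))
  have hrpow : r * (r ^ n)⁻¹ = r ^ ((1:ℝ) - n) := by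
    rw [show (1:ℝ) - n = 1 + (-(n:ℝ)) by ring, Real.rpow_add hr, Real.rpow_one,
      Real.rpow_neg hr.le, Real.rpow_natCast]
  calc ‖bogN n ψ x y‖ = |(r ^ n)⁻¹ * I| * r := hnorm
    _ ≤ ((r ^ n)⁻¹ * (M * (1+R)^n)) * r := mul_le_mul_of_nonneg_right habs hr.le
    _ = (M * (1+R)^n) * (r * (r ^ n)⁻¹) := by ring
    _ = (M * (1+R)^n) * r ^ ((1:ℝ) - n) := by rw [hrpow]

lemma kernel_meas (n : ℕ) (ψ : EuclideanSpace ℝ (Fin n) → ℝ) (hψ : Continuous ψ)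
    (x : EuclideanSpace ℝ (Fin n)) :
    StronglyMeasurable (fun y => bogN n ψ x y) := by
  classical
  set H : EuclideanSpace ℝ (Fin n) × ℝ → ℝ := fun p =>
    if ‖x - p.1‖ < p.2 then ψ (p.1 + (p.2 / ‖x - p.1‖) • (x - p.1)) * p.2 ^ (n - 1) else 0
    with hHdef
  have hHmeas : Measurable H := by
    refine Measurable.ite ?_ ?_ measurable_const
    · exact measurableSet_lt (by fun_prop) measurable_snd
    · refine Measurable.mul ?_ (by fun_prop)
      refine hψ.measurable.comp ?_
      refine Measurable.add measurable_fst ?_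
      refine Measurable.smul (f := fun p : EuclideanSpace ℝ (Fin n) × ℝ => p.2 / ‖x - p.1‖)
        (g := fun p : EuclideanSpace ℝ (Fin n) × ℝ => x - p.1) ?_ ?_
      · exact Measurable.div measurable_snd (by fun_prop)
      · fun_prop
  have hG : StronglyMeasurable fun y => ∫ ξ, H (y, ξ) :=
    hHmeas.stronglyMeasurable.integral_prod_right'
  have hEq : ∀ y, (∫ ξ in Set.Ioi ‖x - y‖, ψ (y + (ξ / ‖x - y‖) • (x - y)) * ξ ^ (n - 1))
      = ∫ ξ, H (y, ξ) := by
    intro y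
    rw [← integral_indicator measurableSet_Ioi]
    refine integral_congr_ae (Filter.Eventually.of_forall fun ξ => ?_)
    simp only [Set.indicator_apply, Set.mem_Ioi, hHdef]
  have : (fun y => bogN n ψ x y) = fun y =>
      ((‖x - y‖ ^ n)⁻¹ * (∫ ξ, H (y, ξ))) • (x - y) := by
    funext y
    rw [bogN, hEq y]
  rw [this]
  refine StronglyMeasurable.smul (f := fun y => (‖x - y‖ ^ n)⁻¹ * ∫ ξ, H (y, ξ))
    (g := fun y => x - y) ?_ ?_
  · exact ((measurable_const.sub measurable_id).norm.pow_const n).inv.stronglyMeasurable.mul hG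
  · exact (continuous_const.sub continuous_id).stronglyMeasurable

theorem stmt3 (n : ℕ) (hn : 2 ≤ n)
    (ψ : EuclideanSpace ℝ (Fin n) → ℝ)
    (hψ : ContDiff ℝ (⊤ : ℕ∞) ψ) (hψc : HasCompactSupport ψ)
    (hψs : tsupport ψ ⊆ Metric.ball (0 : EuclideanSpace ℝ (Fin n)) 1)
    (Ω : Set (EuclideanSpace ℝ (Fin n))) (hΩo : IsOpen Ω) (hΩb : Bornology.IsBounded Ω)
    (hstar : ∀ z ∈ Metric.closedBall (0 : EuclideanSpace ℝ (Fin n)) 1, StarConvex ℝ z Ω)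
    (q : ℝ) (hq : (n : ℝ) < q) (F : EuclideanSpace ℝ (Fin n) → ℝ)
    (hF : MemLp F (ENNReal.ofReal q) (volume.restrict Ω)) :
    (∀ x : EuclideanSpace ℝ (Fin n), IntegrableOn (fun y => F y • bogN n ψ x y) Ω volume) ∧
    ∃ c : ℝ, 0 < c ∧ ∀ x : EuclideanSpace ℝ (Fin n),
      ‖∫ y in Ω, F y • bogN n ψ x y‖ ≤
        c * (eLpNorm F (ENNReal.ofReal q) (volume.restrict Ω)).toReal := by
  classical
  -- bound for ψ
  obtain ⟨M, hM⟩ := hψ.continuous.bounded_above_of_compact_support hψc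
  have hMabs : ∀ z, |ψ z| ≤ M := fun z => by rw [← Real.norm_eq_abs]; exact hM z
  have hM0 : 0 ≤ M := le_trans (norm_nonneg _) (hM 0)
  -- radius for Ω
  obtain ⟨R₀, hR₀⟩ := hΩb.subset_ball 0
  set R : ℝ := max R₀ 1 with hRdef
  have hR1 : (1:ℝ) ≤ R := le_max_right _ _
  have hR0 : (0:ℝ) ≤ R := by linarith
  have hΩR : Ω ⊆ Metric.ball 0 R := hR₀.trans (Metric.ball_subset_ball (le_max_left _ _))
  set K0 : ℝ := M * (1+R)^n with hK0def
  have hK0nn : 0 ≤ K0 := by positivity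
  -- exponents
  have hn2 : (2:ℝ) ≤ (n:ℝ) := by exact_mod_cast hn
  have hq0 : (0:ℝ) < q := by linarith
  have hq1 : (1:ℝ) < q := by linarith
  have hcon : q.HolderConjugate (q / (q-1)) := Real.HolderConjugate.conjExponent hq1
  set q' : ℝ := q / (q-1) with hq'def
  have hq'1 : 1 < q' := hcon.symm.lt
  have hq'0 : 0 < q' := by linarith
  set a : ℝ := ((n:ℝ) - 1) * q' with hadef
  have ha : 0 < a := mul_pos (by linarith) hq'0
  have han : a < n := by
    have hq10 : (0:ℝ) < q - 1 := by linarith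
    rw [hadef, hq'def, show ((n:ℝ)-1) * (q/(q-1)) = (((n:ℝ)-1) * q)/(q-1) by ring,
      div_lt_iff₀ hq10]
    nlinarith
  -- ENNReal exponents
  set pe : ℝ≥0∞ := ENNReal.ofReal q with hpedef
  set re : ℝ≥0∞ := ENNReal.ofReal q' with hredef
  have hre0 : re ≠ 0 := by
    rw [hredef, Ne, ENNReal.ofReal_eq_zero, not_le]; exact hq'0
  have hretop : re ≠ ⊤ := ENNReal.ofReal_ne_top
  have hre_toReal : re.toReal = q' := ENNReal.toReal_ofReal hq'0.le
  have hpr : (1:ℝ≥0∞) / 1 = 1 / pe + 1 / re := by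
    have h1 : 1/pe = ENNReal.ofReal q⁻¹ := by
      rw [hpedef, one_div, ENNReal.ofReal_inv_of_pos hq0]
    have h2 : 1/re = ENNReal.ofReal q'⁻¹ := by
      rw [hredef, one_div, ENNReal.ofReal_inv_of_pos hq'0]
    rw [h1, h2, ← ENNReal.ofReal_add (inv_nonneg.mpr hq0.le) (inv_nonneg.mpr hq'0.le),
      hcon.inv_add_inv_eq_one, ENNReal.ofReal_one, one_div_one]
  haveI hpqr : ENNReal.HolderTriple pe re 1 := ⟨by simpa [one_div] using hpr.symm⟩
  -- uniform lintegral bound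
  set I1 : ℝ≥0∞ := ∫⁻ z in Metric.ball (0 : EuclideanSpace ℝ (Fin n)) 1,
    ENNReal.ofReal (‖z‖ ^ (-a)) with hI1def
  have hI1 : I1 < ⊤ := riesz_finite n (by omega) ha han
  have hvolΩ : volume Ω < ⊤ := lt_of_le_of_lt (measure_mono hΩR) measure_ball_lt_top
  set Atot : ℝ≥0∞ := I1 + volume Ω with hAtotdef
  have hAtot : Atot ≠ ⊤ := by
    rw [hAtotdef]; exact (ENNReal.add_lt_top.mpr ⟨hI1, hvolΩ⟩).ne
  set B : ℝ≥0∞ := Atot ^ (1/q') with hBdef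
  have hBtop : B < ⊤ := ENNReal.rpow_lt_top_of_nonneg (by positivity) hAtot
  -- key estimate, per x
  have key : ∀ x : EuclideanSpace ℝ (Fin n),
      MemLp (fun y => bogN n ψ x y) re (volume.restrict Ω) ∧
      eLpNorm (fun y => bogN n ψ x y) re (volume.restrict Ω) ≤ ENNReal.ofReal K0 * B := by
    intro x
    have hNmeas : AEStronglyMeasurable (fun y => bogN n ψ x y) (volume.restrict Ω) :=
      (kernel_meas n ψ hψ.continuous x).aestronglyMeasurable
    have hkb : ∀ y ∈ Ω, ‖bogN n ψ x y‖ ≤ K0 * ‖x - y‖ ^ ((1:ℝ) - n) := by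
      intro y hy
      exact kernel_bound n hn ψ hψs hMabs hR0 x y (mem_ball_zero_iff.mp (hΩR hy))
    have hmono : eLpNorm (fun y => bogN n ψ x y) re (volume.restrict Ω) ≤
        eLpNorm (fun y => K0 * ‖x - y‖ ^ ((1:ℝ) - n)) re (volume.restrict Ω) := by
      refine eLpNorm_mono_ae ?_
      refine (ae_restrict_iff' hΩo.measurableSet).mpr (Filter.Eventually.of_forall fun y hy => ?_)
      rw [Real.norm_eq_abs, abs_of_nonneg (by positivity)]
      exact hkb y hy
    have hsmul : eLpNorm (fun y => K0 * ‖x - y‖ ^ ((1:ℝ) - n)) re (volume.restrict Ω) =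
        ‖K0‖ₑ * eLpNorm (fun y => ‖x - y‖ ^ ((1:ℝ) - n)) re (volume.restrict Ω) :=
      eLpNorm_const_smul K0 (fun y => ‖x - y‖ ^ ((1:ℝ) - n)) re (volume.restrict Ω)
    have hhx : eLpNorm (fun y => ‖x - y‖ ^ ((1:ℝ) - n)) re (volume.restrict Ω) ≤ B := by
      rw [eLpNorm_eq_lintegral_rpow_enorm_toReal hre0 hretop, hre_toReal, hBdef]
      refine ENNReal.rpow_le_rpow ?_ (by positivity)
      have hpt : ∀ y : EuclideanSpace ℝ (Fin n),
          ‖‖x - y‖ ^ ((1:ℝ) - n)‖ₑ ^ q' = ENNReal.ofReal (‖x - y‖ ^ (-a)) := by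
        intro y
        rw [Real.enorm_eq_ofReal (Real.rpow_nonneg (norm_nonneg _) _),
          ENNReal.ofReal_rpow_of_nonneg (Real.rpow_nonneg (norm_nonneg _) _) hq'0.le,
          ← Real.rpow_mul (norm_nonneg _)]
        congr 2
        rw [hadef]; ring
      calc ∫⁻ y in Ω, ‖‖x - y‖ ^ ((1:ℝ) - n)‖ₑ ^ q'
          = ∫⁻ y in Ω, ENNReal.ofReal (‖x - y‖ ^ (-a)) := by
            refine lintegral_congr fun y => hpt y
        _ ≤ I1 + volume Ω := lint_bound n ha Ω x
        _ = Atot := hAtotdef.symm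
    have hNe : eLpNorm (fun y => bogN n ψ x y) re (volume.restrict Ω) ≤
        ENNReal.ofReal K0 * B := by
      refine le_trans hmono ?_
      rw [hsmul, Real.enorm_eq_ofReal hK0nn]
      exact mul_le_mul_right hhx _
    exact ⟨⟨hNmeas, lt_of_le_of_lt hNe (ENNReal.mul_lt_top ENNReal.ofReal_lt_top hBtop)⟩, hNe⟩
  -- integrability
  have hint : ∀ x : EuclideanSpace ℝ (Fin n),
      IntegrableOn (fun y => F y • bogN n ψ x y) Ω volume := by
    intro x
    exact memLp_one_iff_integrable.mp ((key x).1.smul hF)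
  refine ⟨hint, (ENNReal.ofReal K0 * B).toReal + 1, by positivity, fun x => ?_⟩
  have h1 : ‖∫ y in Ω, F y • bogN n ψ x y‖ ≤ ∫ y in Ω, ‖F y • bogN n ψ x y‖ :=
    norm_integral_le_integral_norm _
  have hFN : MemLp (F • fun y => bogN n ψ x y) 1 (volume.restrict Ω) := (key x).1.smul hF
  have h2 : ∫ y in Ω, ‖F y • bogN n ψ x y‖ =
      (eLpNorm (F • fun y => bogN n ψ x y) 1 (volume.restrict Ω)).toReal := by
    rw [eLpNorm_one_eq_lintegral_enorm]
    exact integral_norm_eq_lintegral_enorm hFN.aestronglyMeasurable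
  have h3 : eLpNorm (F • fun y => bogN n ψ x y) 1 (volume.restrict Ω) ≤
      eLpNorm F pe (volume.restrict Ω) * (ENNReal.ofReal K0 * B) :=
    le_trans (eLpNorm_smul_le_mul_eLpNorm (key x).1.aestronglyMeasurable
      hF.aestronglyMeasurable) (mul_le_mul_right (key x).2 _)
  have hfin : eLpNorm F pe (volume.restrict Ω) * (ENNReal.ofReal K0 * B) ≠ ⊤ :=
    (ENNReal.mul_lt_top hF.eLpNorm_lt_top
      (ENNReal.mul_lt_top ENNReal.ofReal_lt_top hBtop)).ne
  calc ‖∫ y in Ω, F y • bogN n ψ x y‖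
      ≤ (eLpNorm (F • fun y => bogN n ψ x y) 1 (volume.restrict Ω)).toReal := by
        rw [← h2]; exact h1
    _ ≤ (eLpNorm F pe (volume.restrict Ω) * (ENNReal.ofReal K0 * B)).toReal :=
        ENNReal.toReal_mono hfin h3
    _ = (ENNReal.ofReal K0 * B).toReal * (eLpNorm F pe (volume.restrict Ω)).toReal := by
        rw [ENNReal.toReal_mul]; ring
    _ ≤ ((ENNReal.ofReal K0 * B).toReal + 1) * (eLpNorm F pe (volume.restrict Ω)).toReal := by
        have := ENNReal.toReal_nonneg (a := eLpNorm F pe (volume.restrict Ω))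
        nlinarith [ENNReal.toReal_nonneg (a := ENNReal.ofReal K0 * B)]
end
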